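/- arXiv:2305.19277 — 2 statements merged into one kernel-verified Lean document; each statement's English description precedes it below -/
import Mathlib

section
/- Let G be a starlike graph with clique partition (V_0, V_1, …, V_t). Then for every i ∈ {0, 1, …, t}, the split graph G_i has a critical independent set T_i contained in Y_i. -/
open SimpleGraph

variable {V : Type*}

/-- The closed neighborhood of a vertex. -/
def closedNbhd (G : SimpleGraph V) (v : V) : Set V := insert v (G.neighborSet v)

/-- A vertex is simplicial if its closed neighborhood induces a complete graph. -/
def IsSimplicial (G : SimpleGraph V) (v : V) : Prop :=
  ∀ a ∈ closedNbhd G v, ∀ b ∈ closedNbhd G v, a ≠ b → G.Adj a b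

/-- `Z`, the set of simplicial vertices of `G`. -/
def simplicialSet (G : SimpleGraph V) : Set V := {v | IsSimplicial G v}

/-- `N(T)`, the union of open neighborhoods of vertices of `T`. -/
def nbhdSet (G : SimpleGraph V) (T : Set V) : Set V := ⋃ v ∈ T, G.neighborSet v

/-- An independent set of vertices. -/
def IsIndepSet' (G : SimpleGraph V) (T : Set V) : Prop :=
  ∀ u ∈ T, ∀ v ∈ T, ¬ G.Adj u v

/-- The difference `d(T) = |T| - |N(T)|` of a set of vertices. -/
noncomputable def indepDiff (G : SimpleGraph V) (T : Set V) : ℤ :=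
  (T.ncard : ℤ) - ((nbhdSet G T).ncard : ℤ)

/-- The critical independence difference `d_c(G)`. -/
noncomputable def critIndepDiff (G : SimpleGraph V) : ℤ :=
  sSup {d : ℤ | ∃ T : Set V, IsIndepSet' G T ∧ d = indepDiff G T}

/-- A walk is an induced path if it is a path and no two non-consecutive vertices
of it are adjacent. -/
def IsInducedPath (G : SimpleGraph V) {a b : V} (p : G.Walk a b) : Prop :=
  p.IsPath ∧ ∀ (i j : ℕ) (hi : i < p.support.length) (hj : j < p.support.length),
    i + 1 < j → ¬ G.Adj (p.support.get ⟨i, hi⟩) (p.support.get ⟨j, hj⟩)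

/-- A set is monophonically convex if it contains every vertex of every induced path
joining two of its vertices. -/
def MonoConvex (G : SimpleGraph V) (S : Set V) : Prop :=
  ∀ ⦃a b : V⦄, a ∈ S → b ∈ S → ∀ p : G.Walk a b, IsInducedPath G p →
    ∀ w ∈ p.support, w ∈ S

/-- The monophonic convex hull of `S`: the smallest monophonically convex set containing `S`. -/
def monoHull (G : SimpleGraph V) (S : Set V) : Set V :=
  ⋂₀ {T : Set V | S ⊆ T ∧ MonoConvex G T}

/-- A set is monophonically convexly independent if no member is in the hull
of the others. -/
def MConvexIndep (G : SimpleGraph V) (S : Set V) : Prop :=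
  ∀ v ∈ S, v ∉ monoHull G (S \ {v})

/-- The monophonic rank: the largest size of an m-convexly independent set. -/
noncomputable def monoRank (G : SimpleGraph V) : ℕ :=
  sSup {n : ℕ | ∃ S : Set V, MConvexIndep G S ∧ n = S.ncard}

/-- A starlike partition of a graph: a partition of the vertex set into cliques
`V_0, V_1, …, V_t` such that `V_0` is a maximal clique and, for `i ≥ 1`,
all vertices of `V_i` have the same closed neighborhood outside `V_i`,
contained in `V_0`. -/
structure IsStarlikePartition (G : SimpleGraph V) (t : ℕ) (Vp : Fin (t+1) → Set V) : Prop where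
  nonempty : ∀ i, (Vp i).Nonempty
  disjoint : ∀ i j, i ≠ j → Disjoint (Vp i) (Vp j)
  covers : ∀ v : V, ∃ i, v ∈ Vp i
  cliques : ∀ i, G.IsClique (Vp i)
  maximal : ∀ T : Set V, G.IsClique T → Vp 0 ⊆ T → T ⊆ Vp 0
  nbhd_eq : ∀ i : Fin (t+1), i ≠ 0 → ∀ u ∈ Vp i, ∀ v ∈ Vp i,
    closedNbhd G u \ Vp i = closedNbhd G v \ Vp i
  nbhd_sub : ∀ i : Fin (t+1), i ≠ 0 → ∀ u ∈ Vp i, closedNbhd G u \ Vp i ⊆ Vp 0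

/-- `X_i`: the maximal clique containing `V_i` (`X_0 = V_0`; for `i ≥ 1` it is
the closed neighborhood of any vertex of `V_i`). -/
def Xset (G : SimpleGraph V) {t : ℕ} (Vp : Fin (t+1) → Set V) (i : Fin (t+1)) : Set V :=
  if i = 0 then Vp 0 else ⋃ u ∈ Vp i, closedNbhd G u

/-- `C_i = X_i ∩ Z`. -/
def Cset (G : SimpleGraph V) {t : ℕ} (Vp : Fin (t+1) → Set V) (i : Fin (t+1)) : Set V :=
  Xset G Vp i ∩ simplicialSet G

/-- `C'_i = X_i − C_i`. -/
def Cset' (G : SimpleGraph V) {t : ℕ} (Vp : Fin (t+1) → Set V) (i : Fin (t+1)) : Set V :=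
  Xset G Vp i \ Cset G Vp i

/-- `Y_i`: the union of the sets `C_j`, over `j ≠ i` with `C'_j ⊆ C'_i`. -/
def Yset (G : SimpleGraph V) {t : ℕ} (Vp : Fin (t+1) → Set V) (i : Fin (t+1)) : Set V :=
  ⋃ j ∈ {j : Fin (t+1) | j ≠ i ∧ Cset' G Vp j ⊆ Cset' G Vp i}, Cset G Vp j

open scoped Classical in
/-- The vertex set of the split graph `G_i`: if `|N(Y_i) − Y_i| = |C'_i| − 1` and
`|Y_i| ≥ |C'_i| − 1` then `(C'_i − {x}) ∪ Y_i` where `{x} = C'_i − N(Y_i)`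
(so that `C'_i − {x} = C'_i ∩ N(Y_i)`), otherwise `C'_i ∪ Y_i`. -/
noncomputable def Wset (G : SimpleGraph V) {t : ℕ} (Vp : Fin (t+1) → Set V)
    (i : Fin (t+1)) : Set V :=
  if (((nbhdSet G (Yset G Vp i) \ Yset G Vp i).ncard : ℤ) = ((Cset' G Vp i).ncard : ℤ) - 1
      ∧ ((Yset G Vp i).ncard : ℤ) ≥ ((Cset' G Vp i).ncard : ℤ) - 1)
  then (Cset' G Vp i ∩ nbhdSet G (Yset G Vp i)) ∪ Yset G Vp i
  else Cset' G Vp i ∪ Yset G Vp i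

/-- The induced subgraph on `W` with all edges inside `Y` deleted. -/
def inducedMinusY (G : SimpleGraph V) (W Y : Set V) : SimpleGraph ↥W where
  Adj a b := G.Adj a b ∧ ¬((a : V) ∈ Y ∧ (b : V) ∈ Y)
  symm := by
    constructor
    intro a b h
    exact ⟨h.1.symm, fun hc => h.2 ⟨hc.2, hc.1⟩⟩
  loopless := by
    constructor
    intro a h
    exact G.ne_of_adj h.1 rfl

/-- The split graph `G_i = G[W_i] − E(G[Y_i])`. -/
noncomputable def Gsplit (G : SimpleGraph V) {t : ℕ} (Vp : Fin (t+1) → Set V)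
    (i : Fin (t+1)) : SimpleGraph ↥(Wset G Vp i) :=
  inducedMinusY G (Wset G Vp i) (Yset G Vp i)

/-!
In `G_i` the set `Y_i` is independent and `W_i − Y_i ⊆ C'_i` is a clique, so an independent set
not inside `Y_i` is `S ∪ {u}` with `S ⊆ Y_i` and `u ∉ Y_i`. If `u` has a neighbour outside `N(S)`,
then `d(S ∪ {u}) ≤ d(S)`. Otherwise `N(S)` contains the clique minus `u` while `N(Y_i)` avoids `u`,
so `|N(Y_i)| = |C'_i| - 1` and `u` has no neighbour in `Y_i`. Then `x` was not removed, which
forces `|Y_i| < |C'_i| - 1`, and `d(S ∪ {u}) ≤ 0 = d(∅)`. Hence a maximiser of `d` over the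
subsets of `Y_i` is critical.
-/

section Difference

variable {G : SimpleGraph V} {Y S T : Set V} {u x : V}

lemma mem_nbhdSet : x ∈ nbhdSet G T ↔ ∃ v ∈ T, G.Adj v x := by
  simp [nbhdSet]

lemma nbhdSet_mono (h : S ⊆ T) : nbhdSet G S ⊆ nbhdSet G T :=
  Set.biUnion_subset_biUnion_left h

lemma nbhdSet_insert : nbhdSet G (insert u S) = G.neighborSet u ∪ nbhdSet G S :=
  Set.biUnion_insert _ _ _

lemma IsIndepSet'.mono (hT : IsIndepSet' G T) (h : S ⊆ T) : IsIndepSet' G S :=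
  fun u hu v hv => hT u (h hu) v (h hv)

lemma indepDiff_empty : indepDiff G ∅ = 0 := by
  simp [indepDiff, nbhdSet]

lemma indepDiff_insert_le [Finite V] (hu : u ∉ S) (h : ¬ G.neighborSet u ⊆ nbhdSet G S) :
    indepDiff G (insert u S) ≤ indepDiff G S := by
  obtain ⟨x, hxu, hxS⟩ := Set.not_subset.1 h
  have hlt : (nbhdSet G S).ncard < (nbhdSet G (insert u S)).ncard := by
    rw [nbhdSet_insert]
    exact Set.ncard_lt_ncard
      ((Set.ssubset_iff_of_subset Set.subset_union_right).2 ⟨x, Or.inl hxu, hxS⟩)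
  simp only [indepDiff, Set.ncard_insert_of_notMem hu]
  omega

lemma critIndepDiff_eq_of_forall_le (hT : IsIndepSet' G T)
    (h : ∀ T', IsIndepSet' G T' → indepDiff G T' ≤ indepDiff G T) :
    critIndepDiff G = indepDiff G T :=
  IsGreatest.csSup_eq ⟨⟨T, hT, rfl⟩, by rintro _ ⟨T', hT', rfl⟩; exact h T' hT'⟩

lemma nbhdSet_subset_compl (hY : IsIndepSet' G Y) (hS : S ⊆ Y) : nbhdSet G S ⊆ Yᶜ := by
  intro x hx hxY
  obtain ⟨v, hv, hvx⟩ := mem_nbhdSet.1 hx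
  exact hY v (hS hv) x hxY hvx

lemma IsIndepSet'.eq_insert_inter (hK : G.IsClique Yᶜ) (hT : IsIndepSet' G T) (hu : u ∈ T)
    (huY : u ∉ Y) : T = insert u (T ∩ Y) := by
  refine Set.Subset.antisymm (fun v hv => ?_) (Set.insert_subset hu Set.inter_subset_left)
  by_cases hvY : v ∈ Y
  · exact Set.mem_insert_of_mem _ ⟨hv, hvY⟩
  · by_contra hvu
    exact hT u hu v hv (hK huY hvY fun h => hvu (h ▸ Set.mem_insert u _))

end Difference

section SplitGraph

/-- The numerical condition under which `G_i` drops the vertex `x`, for a split graph whose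
independent side is `Y`. -/
def SplitCardCondition (H : SimpleGraph V) (Y : Set V) : Prop :=
  ((nbhdSet H Y).ncard : ℤ) = (Yᶜ.ncard : ℤ) - 1 ∧ (Y.ncard : ℤ) ≥ (Yᶜ.ncard : ℤ) - 1

variable [Finite V] {H : SimpleGraph V} {Y S T : Set V} {u : V}

lemma indepDiff_insert_nonpos (hY : IsIndepSet' H Y) (hK : H.IsClique Yᶜ)
    (hcond : (∀ u ∉ Y, ∃ y ∈ Y, H.Adj u y) ∨ ¬ SplitCardCondition H Y)
    (hSY : S ⊆ Y) (huY : u ∉ Y) (hN : H.neighborSet u ⊆ nbhdSet H S) :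
    indepDiff H (insert u S) ≤ 0 := by
  have hnoY : ∀ y ∈ Y, ¬ H.Adj u y := fun y hy huy => nbhdSet_subset_compl hY hSY (hN huy) hy
  have hcompl_S : Yᶜ \ {u} ⊆ nbhdSet H S := fun v hv => hN (hK huY hv.1 fun h => hv.2 h.symm)
  have hY_compl : nbhdSet H Y ⊆ Yᶜ \ {u} := by
    refine fun x hx => ⟨nbhdSet_subset_compl hY le_rfl hx, fun (hxu : x = u) => ?_⟩
    obtain ⟨y, hy, hyx⟩ := mem_nbhdSet.1 hx
    exact hnoY y hy (hxu ▸ hyx.symm)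
  have hcompl_card : (Yᶜ \ {u}).ncard + 1 = Yᶜ.ncard := by
    rw [Set.ncard_sdiff_singleton_of_mem huY]
    have := (Set.ncard_pos (s := Yᶜ)).2 ⟨u, huY⟩
    omega
  have hS_card := Set.ncard_le_ncard hcompl_S
  have hSY_card := Set.ncard_le_ncard (nbhdSet_mono (G := H) hSY)
  have hY_card := Set.ncard_le_ncard hY_compl
  have hsmall := hcond.resolve_left fun h => by
    obtain ⟨y, hy, huy⟩ := h u huY
    exact hnoY y hy huy
  have hins : nbhdSet H (insert u S) = nbhdSet H S := by
    rw [nbhdSet_insert, Set.union_eq_right.2 hN]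
  have hinsert_card := Set.ncard_insert_le u S
  have hS_le := Set.ncard_le_ncard hSY
  simp only [SplitCardCondition] at hsmall
  simp only [indepDiff, hins]
  omega

lemma exists_subset_indepDiff_ge (hY : IsIndepSet' H Y) (hK : H.IsClique Yᶜ)
    (hcond : (∀ u ∉ Y, ∃ y ∈ Y, H.Adj u y) ∨ ¬ SplitCardCondition H Y)
    (hT : IsIndepSet' H T) : ∃ S ⊆ Y, indepDiff H T ≤ indepDiff H S := by
  by_cases hTY : T ⊆ Y
  · exact ⟨T, hTY, le_rfl⟩
  obtain ⟨u, hu, huY⟩ := Set.not_subset.1 hTY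
  rw [hT.eq_insert_inter hK hu huY]
  by_cases hN : H.neighborSet u ⊆ nbhdSet H (T ∩ Y)
  · exact ⟨∅, Set.empty_subset Y, indepDiff_empty.symm ▸
      indepDiff_insert_nonpos hY hK hcond Set.inter_subset_right huY hN⟩
  · exact ⟨T ∩ Y, Set.inter_subset_right, indepDiff_insert_le (fun h => huY h.2) hN⟩

theorem exists_critical_subset (hY : IsIndepSet' H Y) (hK : H.IsClique Yᶜ)
    (hcond : (∀ u ∉ Y, ∃ y ∈ Y, H.Adj u y) ∨ ¬ SplitCardCondition H Y) :
    ∃ T ⊆ Y, indepDiff H T = critIndepDiff H := by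
  obtain ⟨T, hTY, hmax⟩ := Set.exists_max_image {S | S ⊆ Y} (indepDiff H) (Set.toFinite _)
    ⟨∅, Set.empty_subset Y⟩
  refine ⟨T, hTY, (critIndepDiff_eq_of_forall_le (hY.mono hTY) fun T' hT' => ?_).symm⟩
  obtain ⟨S, hSY, hS⟩ := exists_subset_indepDiff_ge hY hK hcond hT'
  exact hS.trans (hmax S hSY)

end SplitGraph

lemma mem_closedNbhd_iff {G : SimpleGraph V} {u v : V} :
    u ∈ closedNbhd G v ↔ u = v ∨ G.Adj v u :=
  Iff.rfl

lemma SimpleGraph.IsClique.subset_closedNbhd {G : SimpleGraph V} {S : Set V} (h : G.IsClique S)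
    {y : V} (hy : y ∈ S) : S ⊆ closedNbhd G y := by
  intro x hx
  rcases eq_or_ne x y with rfl | hne
  · exact Set.mem_insert x _
  · exact Or.inr (h hy hx hne.symm)

namespace IsStarlikePartition

variable {G : SimpleGraph V} {t : ℕ} {Vp : Fin (t+1) → Set V} (hstar : IsStarlikePartition G t Vp)
include hstar

lemma adj_of_mem_closedNbhd {j : Fin (t+1)} (hj : j ≠ 0) {u a b : V} (hu : u ∈ Vp j)
    (ha : a ∈ Vp j) (hb : b ∈ closedNbhd G u) (hbj : b ∉ Vp j) : G.Adj a b := by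
  have hb' : b ∈ closedNbhd G a \ Vp j := hstar.nbhd_eq j hj a ha u hu ▸ ⟨hb, hbj⟩
  exact (mem_closedNbhd_iff.1 hb'.1).resolve_left fun hba => hbj (hba ▸ ha)

lemma closedNbhd_subset {j : Fin (t+1)} (hj : j ≠ 0) {u v : V} (hu : u ∈ Vp j)
    (hv : v ∈ Vp j) : closedNbhd G u ⊆ closedNbhd G v := by
  intro x hx
  by_cases hxj : x ∈ Vp j
  · exact (hstar.cliques j).subset_closedNbhd hv hxj
  · exact Or.inr (hstar.adj_of_mem_closedNbhd hj hu hv hx hxj)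

lemma Xset_eq {j : Fin (t+1)} (hj : j ≠ 0) {u : V} (hu : u ∈ Vp j) :
    Xset G Vp j = closedNbhd G u := by
  rw [Xset, if_neg hj]
  exact Set.Subset.antisymm (Set.iUnion₂_subset fun v hv => hstar.closedNbhd_subset hj hv hu)
    (Set.subset_biUnion_of_mem hu)

lemma isClique_Xset (j : Fin (t+1)) : G.IsClique (Xset G Vp j) := by
  by_cases hj : j = 0
  · subst hj
    rw [Xset, if_pos rfl]
    exact hstar.cliques 0
  obtain ⟨u, hu⟩ := hstar.nonempty j
  rw [hstar.Xset_eq hj hu]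
  intro a ha b hb hab
  by_cases haj : a ∈ Vp j <;> by_cases hbj : b ∈ Vp j
  · exact hstar.cliques j haj hbj hab
  · exact hstar.adj_of_mem_closedNbhd hj hu haj hb hbj
  · exact (hstar.adj_of_mem_closedNbhd hj hu hbj ha haj).symm
  · exact hstar.cliques 0 (hstar.nbhd_sub j hj u hu ⟨ha, haj⟩)
      (hstar.nbhd_sub j hj u hu ⟨hb, hbj⟩) hab

lemma Xset_maximal (j : Fin (t+1)) {T : Set V} (hT : G.IsClique T) (hsub : Xset G Vp j ⊆ T) :
    T ⊆ Xset G Vp j := by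
  by_cases hj : j = 0
  · subst hj
    rw [Xset, if_pos rfl] at *
    exact hstar.maximal T hT hsub
  obtain ⟨u, hu⟩ := hstar.nonempty j
  rw [hstar.Xset_eq hj hu] at *
  exact hT.subset_closedNbhd (hsub (Set.mem_insert u _))

lemma closedNbhd_eq_Xset {j : Fin (t+1)} {y : V} (hy : y ∈ Cset G Vp j) :
    closedNbhd G y = Xset G Vp j := by
  have hsub : Xset G Vp j ⊆ closedNbhd G y := (hstar.isClique_Xset j).subset_closedNbhd hy.1
  exact Set.Subset.antisymm (hstar.Xset_maximal j (fun _ ha _ hb => hy.2 _ ha _ hb) hsub) hsub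

lemma isClique_Cset' (i : Fin (t+1)) : G.IsClique (Cset' G Vp i) :=
  (hstar.isClique_Xset i).subset Set.sdiff_subset

lemma nbhdSet_Yset_diff_subset (i : Fin (t+1)) :
    nbhdSet G (Yset G Vp i) \ Yset G Vp i ⊆ Cset' G Vp i := by
  rintro x ⟨hx, hxY⟩
  obtain ⟨y, hy, hyx⟩ := mem_nbhdSet.1 hx
  simp only [Yset, Set.mem_iUnion] at hy
  obtain ⟨j, hj, hyj⟩ := hy
  have hxX : x ∈ Xset G Vp j := hstar.closedNbhd_eq_Xset hyj ▸ Or.inr hyx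
  exact hj.2 ⟨hxX, fun hxC => hxY (Set.mem_biUnion hj hxC)⟩

end IsStarlikePartition

section SplitGraphOfStarlike

variable {G : SimpleGraph V} {t : ℕ} {Vp : Fin (t+1) → Set V}

lemma Yset_subset_Wset (i : Fin (t+1)) : Yset G Vp i ⊆ Wset G Vp i := by
  unfold Wset
  split_ifs <;> exact Set.subset_union_right

lemma Wset_diff_Yset_subset (i : Fin (t+1)) :
    Wset G Vp i \ Yset G Vp i ⊆ Cset' G Vp i := by
  unfold Wset
  split_ifs <;> rintro x ⟨hx | hx, hxY⟩
  exacts [hx.1, absurd hx hxY, hx, absurd hx hxY]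

lemma Wset_cases (i : Fin (t+1)) :
    Wset G Vp i \ Yset G Vp i ⊆ nbhdSet G (Yset G Vp i) ∨
      (Wset G Vp i = Cset' G Vp i ∪ Yset G Vp i ∧
        ¬ (((nbhdSet G (Yset G Vp i) \ Yset G Vp i).ncard : ℤ) = ((Cset' G Vp i).ncard : ℤ) - 1
          ∧ ((Yset G Vp i).ncard : ℤ) ≥ ((Cset' G Vp i).ncard : ℤ) - 1)) := by
  unfold Wset
  split_ifs with h
  · left
    rintro x ⟨hx | hx, hxY⟩
    exacts [hx.2, absurd hx hxY]
  · exact Or.inr ⟨rfl, h⟩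

lemma Yset_disjoint_Cset' (i : Fin (t+1)) : Disjoint (Yset G Vp i) (Cset' G Vp i) := by
  refine Set.disjoint_left.2 fun y hy hyC => hyC.2 ⟨hyC.1, ?_⟩
  simp only [Yset, Set.mem_iUnion] at hy
  obtain ⟨j, -, hyj⟩ := hy
  exact hyj.2

end SplitGraphOfStarlike

section InducedMinusY

variable {G : SimpleGraph V} {W Y : Set V}

lemma isIndepSet'_inducedMinusY : IsIndepSet' (inducedMinusY G W Y) (Subtype.val ⁻¹' Y) :=
  fun _ hu _ hv h => h.2 ⟨hu, hv⟩

lemma isClique_inducedMinusY_compl (hK : G.IsClique (W \ Y)) :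
    (inducedMinusY G W Y).IsClique (Subtype.val ⁻¹' Y)ᶜ :=
  fun a ha b hb hab => ⟨hK ⟨a.2, ha⟩ ⟨b.2, hb⟩ (Subtype.val_injective.ne hab), fun h => ha h.1⟩

lemma image_val_nbhdSet_inducedMinusY (hYW : Y ⊆ W) :
    Subtype.val '' nbhdSet (inducedMinusY G W Y) (Subtype.val ⁻¹' Y) =
      (nbhdSet G Y \ Y) ∩ W := by
  ext x
  constructor
  · rintro ⟨w, hw, rfl⟩
    obtain ⟨v, hv, hvw, hnot⟩ := mem_nbhdSet.1 hw
    exact ⟨⟨mem_nbhdSet.2 ⟨v, hv, hvw⟩, fun hwY => hnot ⟨hv, hwY⟩⟩, w.2⟩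
  · rintro ⟨⟨hx, hxY⟩, hxW⟩
    obtain ⟨y, hy, hyx⟩ := mem_nbhdSet.1 hx
    exact ⟨⟨x, hxW⟩, mem_nbhdSet.2 ⟨⟨y, hYW hy⟩, hy, hyx, fun h => hxY h.2⟩, rfl⟩

lemma ncard_preimage_val (s : Set V) :
    (Subtype.val ⁻¹' s : Set W).ncard = (W ∩ s).ncard := by
  rw [← Subtype.image_preimage_coe, Set.ncard_image_of_injective _ Subtype.val_injective]

end InducedMinusY

lemma IsStarlikePartition.forall_adj_Yset_or_not_splitCardCondition {G : SimpleGraph V} {t : ℕ}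
    {Vp : Fin (t+1) → Set V} (hstar : IsStarlikePartition G t Vp) (i : Fin (t+1)) :
    (∀ u ∉ (Subtype.val ⁻¹' Yset G Vp i : Set (Wset G Vp i)),
        ∃ y ∈ (Subtype.val ⁻¹' Yset G Vp i : Set (Wset G Vp i)), (Gsplit G Vp i).Adj u y) ∨
      ¬ SplitCardCondition (Gsplit G Vp i) (Subtype.val ⁻¹' Yset G Vp i) := by
  have hYW := Yset_subset_Wset (G := G) (Vp := Vp) i
  rcases Wset_cases i with hW | ⟨hW, hcond⟩
  · refine Or.inl fun u hu => ?_
    obtain ⟨y, hy, hyu⟩ := mem_nbhdSet.1 (hW ⟨u.2, hu⟩)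
    exact ⟨⟨y, hYW hy⟩, hy, hyu.symm, fun h => hu h.1⟩
  refine Or.inr ?_
  have hY : (Subtype.val ⁻¹' Yset G Vp i : Set (Wset G Vp i)).ncard = (Yset G Vp i).ncard := by
    rw [ncard_preimage_val, Set.inter_eq_right.2 hYW]
  have hK : (Subtype.val ⁻¹' Yset G Vp i : Set (Wset G Vp i))ᶜ.ncard = (Cset' G Vp i).ncard := by
    rw [← Set.preimage_compl, ncard_preimage_val, hW, Set.union_inter_distrib_right,
      Set.inter_compl_self, Set.union_empty,
      Set.inter_eq_left.2 (Yset_disjoint_Cset' i).symm.subset_compl_right]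
  have hN : (nbhdSet (Gsplit G Vp i) (Subtype.val ⁻¹' Yset G Vp i)).ncard =
      (nbhdSet G (Yset G Vp i) \ Yset G Vp i).ncard := by
    rw [← Set.ncard_image_of_injective _ Subtype.val_injective, Gsplit,
      image_val_nbhdSet_inducedMinusY hYW, Set.inter_eq_left.2
        ((hstar.nbhdSet_Yset_diff_subset i).trans (hW ▸ Set.subset_union_left))]
  rwa [SplitCardCondition, hY, hK, hN]

/-- Lemma 2: for every `i`, the split graph `G_i` has a critical
independent set contained in `Y_i`. -/
theorem statement2 [Fintype V] (G : SimpleGraph V) (t : ℕ) (Vp : Fin (t+1) → Set V)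
    (hstar : IsStarlikePartition G t Vp) (i : Fin (t+1)) :
    ∃ T : Set ↥(Wset G Vp i),
      IsIndepSet' (Gsplit G Vp i) T ∧
      indepDiff (Gsplit G Vp i) T = critIndepDiff (Gsplit G Vp i) ∧
      Subtype.val '' T ⊆ Yset G Vp i := by
  have hK : (Gsplit G Vp i).IsClique (Subtype.val ⁻¹' Yset G Vp i)ᶜ :=
    isClique_inducedMinusY_compl ((hstar.isClique_Cset' i).subset (Wset_diff_Yset_subset i))
  obtain ⟨T, hTY, hT⟩ :=
    exists_critical_subset isIndepSet'_inducedMinusY hK (hstar.forall_adj_Yset_or_not_splitCardCondition i)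
  exact ⟨T, isIndepSet'_inducedMinusY.mono hTY, hT, Set.image_subset_iff.2 hTY⟩
end

section
/- Let G be a starlike graph with clique partition (V_0, V_1, …, V_t) and let S be an m-convexly independent set of G such that no vertex of S ∩ C'_0 is adjacent to a vertex of S ∩ Z. Then |S| ≤ |X_0| + d_c(G_0). -/
open SimpleGraph

variable {V : Type*}

/-!
The vertices of `S` outside `V₀` are simplicial and lie in `Y₀`, so they form an independent
set `T` of `G₀`, whose edges inside `Y₀` are deleted. A `G₀`-neighbour of `T` lies in `C'₀ ⊆ V₀`,
and it is not in `S` by the non-adjacency hypothesis. Hence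
`|S| = |S ∩ V₀| + |T| ≤ |V₀| - |N(T)| + |T| ≤ |X₀| + d_c(G₀)`.
-/

theorem Set.ncard_sub_ncard_eq {α : Type*} {s t : Set α} (hs : s.Finite) (ht : t.Finite) :
    (s.ncard : ℤ) - t.ncard = (s \ t).ncard - (t \ s).ncard := by
  have hs' := Set.ncard_inter_add_ncard_sdiff_eq_ncard s t hs
  have ht' := Set.ncard_inter_add_ncard_sdiff_eq_ncard t s ht
  rw [Set.inter_comm] at ht'
  omega

theorem indepDiff_le_critIndepDiff [Finite V] {G : SimpleGraph V} {T : Set V}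
    (hT : IsIndepSet' G T) : indepDiff G T ≤ critIndepDiff G := by
  refine le_csSup ⟨(Set.univ : Set V).ncard, ?_⟩ ⟨T, hT, rfl⟩
  rintro _ ⟨T', -, rfl⟩
  have : T'.ncard ≤ (Set.univ : Set V).ncard := Set.ncard_le_ncard (Set.subset_univ T')
  rw [indepDiff]
  omega

theorem isIndepSet'_inducedMinusY_s14 {G : SimpleGraph V} {W Y : Set V} {T : Set W}
    (hT : Subtype.val '' T ⊆ Y) : IsIndepSet' (inducedMinusY G W Y) T :=
  fun _ hu _ hv hadj => hadj.2 ⟨hT ⟨_, hu, rfl⟩, hT ⟨_, hv, rfl⟩⟩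

theorem xset_zero (G : SimpleGraph V) {t : ℕ} (Vp : Fin (t+1) → Set V) :
    Xset G Vp 0 = Vp 0 := if_pos rfl

theorem wset_sdiff_yset_subset (G : SimpleGraph V) {t : ℕ} (Vp : Fin (t+1) → Set V)
    (i : Fin (t+1)) : Wset G Vp i \ Yset G Vp i ⊆ Cset' G Vp i := by
  rintro w ⟨hw, hwY⟩
  rw [Wset] at hw
  split_ifs at hw
  · exact (hw.resolve_right hwY).1
  · exact hw.resolve_right hwY

theorem yset_subset_wset (G : SimpleGraph V) {t : ℕ} (Vp : Fin (t+1) → Set V)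
    (i : Fin (t+1)) : Yset G Vp i ⊆ Wset G Vp i := by
  rw [Wset]
  split_ifs <;> exact Set.subset_union_right

namespace IsStarlikePartition

variable {G : SimpleGraph V} {t : ℕ} {Vp : Fin (t+1) → Set V}

theorem isSimplicial_of_mem (hstar : IsStarlikePartition G t Vp) {i : Fin (t+1)} (hi : i ≠ 0)
    {v : V} (hv : v ∈ Vp i) : IsSimplicial G v := by
  have outside : ∀ x ∈ closedNbhd G v, x ∉ Vp i → x ∈ Vp 0 := fun x hx hxi =>
    hstar.nbhd_sub i hi v hv ⟨hx, hxi⟩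
  have sees : ∀ a ∈ Vp i, ∀ b ∈ closedNbhd G v, b ∉ Vp i → G.Adj a b := by
    intro a ha b hb hbi
    have hb' : b ∈ closedNbhd G a \ Vp i := by
      rw [← hstar.nbhd_eq i hi v hv a ha]; exact ⟨hb, hbi⟩
    rcases hb'.1 with rfl | hab
    · exact absurd ha hbi
    · exact hab
  intro a ha b hb hab
  by_cases hai : a ∈ Vp i <;> by_cases hbi : b ∈ Vp i
  · exact hstar.cliques i hai hbi hab
  · exact sees a hai b hb hbi
  · exact (sees b hbi a ha hai).symm
  · exact hstar.cliques 0 (outside a ha hai) (outside b hb hbi) hab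

theorem isSimplicial_of_not_mem_zero (hstar : IsStarlikePartition G t Vp) {v : V}
    (hv : v ∉ Vp 0) : IsSimplicial G v := by
  obtain ⟨j, hj⟩ := hstar.covers v
  exact hstar.isSimplicial_of_mem (fun h => hv (h ▸ hj)) hj

theorem cset'_subset_cset'_zero (hstar : IsStarlikePartition G t Vp) {j : Fin (t+1)}
    (hj : j ≠ 0) : Cset' G Vp j ⊆ Cset' G Vp 0 := by
  rintro w ⟨hwX, hwC⟩
  have hwZ : w ∉ simplicialSet G := fun hz => hwC ⟨hwX, hz⟩
  rw [Xset, if_neg hj] at hwX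
  obtain ⟨u, hu, hwu⟩ := Set.mem_iUnion₂.1 hwX
  have hwj : w ∉ Vp j := fun hwj => hwZ (hstar.isSimplicial_of_mem hj hwj)
  refine ⟨?_, fun hc => hwZ hc.2⟩
  rw [xset_zero]
  exact hstar.nbhd_sub j hj u hu ⟨hwu, hwj⟩

theorem mem_yset_zero_of_not_mem (hstar : IsStarlikePartition G t Vp) {v : V}
    (hv : v ∉ Vp 0) : v ∈ Yset G Vp 0 := by
  obtain ⟨j, hj⟩ := hstar.covers v
  have hj0 : j ≠ 0 := fun h => hv (h ▸ hj)
  have hvX : v ∈ Xset G Vp j := by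
    rw [Xset, if_neg hj0]
    exact Set.mem_iUnion₂.2 ⟨v, hj, Set.mem_insert v _⟩
  exact Set.mem_iUnion₂.2
    ⟨j, ⟨hj0, hstar.cset'_subset_cset'_zero hj0⟩, hvX, hstar.isSimplicial_of_mem hj0 hj⟩

theorem image_nbhdSet_gsplit_zero_subset (hstar : IsStarlikePartition G t Vp) {S : Set V}
    (h : ∀ u ∈ S ∩ Cset' G Vp 0, ∀ v ∈ S ∩ simplicialSet G, ¬ G.Adj u v) :
    Subtype.val '' nbhdSet (Gsplit G Vp 0) (Subtype.val ⁻¹' (S \ Vp 0)) ⊆ Vp 0 \ S := by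
  rintro _ ⟨w, hw, rfl⟩
  obtain ⟨u, hu, hadj⟩ := Set.mem_iUnion₂.1 hw
  change G.Adj u w ∧ _ at hadj
  have huS : (u : V) ∈ S \ Vp 0 := hu
  have hwY : (w : V) ∉ Yset G Vp 0 := fun hwY =>
    hadj.2 ⟨hstar.mem_yset_zero_of_not_mem huS.2, hwY⟩
  have hwC : (w : V) ∈ Cset' G Vp 0 := wset_sdiff_yset_subset G Vp 0 ⟨w.2, hwY⟩
  refine ⟨xset_zero G Vp ▸ hwC.1, fun hwS => ?_⟩
  exact h w ⟨hwS, hwC⟩ u ⟨huS.1, hstar.isSimplicial_of_not_mem_zero huS.2⟩ hadj.1.symm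

end IsStarlikePartition

theorem statement14_general [Fintype V] (G : SimpleGraph V) (t : ℕ) (Vp : Fin (t+1) → Set V)
    (hstar : IsStarlikePartition G t Vp) (S : Set V)
    (h : ∀ u ∈ S ∩ Cset' G Vp 0, ∀ v ∈ S ∩ simplicialSet G, ¬ G.Adj u v) :
    (S.ncard : ℤ) ≤ ((Xset G Vp 0).ncard : ℤ) + critIndepDiff (Gsplit G Vp 0) := by
  set T : Set (Wset G Vp 0) := Subtype.val ⁻¹' (S \ Vp 0)
  have hSY : S \ Vp 0 ⊆ Yset G Vp 0 := fun v hv => hstar.mem_yset_zero_of_not_mem hv.2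
  have hcardT : T.ncard = (S \ Vp 0).ncard :=
    Set.ncard_preimage_of_injective_subset_range Subtype.val_injective
      (by rw [Subtype.range_coe]; exact hSY.trans (yset_subset_wset G Vp 0))
  have hindep : IsIndepSet' (Gsplit G Vp 0) T :=
    isIndepSet'_inducedMinusY_s14 ((Set.image_preimage_subset _ _).trans hSY)
  have hcardN : (nbhdSet (Gsplit G Vp 0) T).ncard ≤ (Vp 0 \ S).ncard :=
    Set.ncard_le_ncard_of_injOn Subtype.val
      (fun w hw => hstar.image_nbhdSet_gsplit_zero_subset h ⟨w, hw, rfl⟩)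
      Subtype.val_injective.injOn
  have hdiff := Set.ncard_sub_ncard_eq S.toFinite (Vp 0).toFinite
  have hdc := indepDiff_le_critIndepDiff hindep
  rw [indepDiff] at hdc
  rw [xset_zero]
  omega

/-- if `S` is m-convexly independent in a starlike graph and no vertex of
`S ∩ C'_0` is adjacent to a vertex of `S ∩ Z`, then `|S| ≤ |X_0| + d_c(G_0)`. -/
theorem statement14 [Fintype V] (G : SimpleGraph V) (t : ℕ) (Vp : Fin (t+1) → Set V)
    (hstar : IsStarlikePartition G t Vp) (S : Set V) (hS : MConvexIndep G S)
    (h : ∀ u ∈ S ∩ Cset' G Vp 0, ∀ v ∈ S ∩ simplicialSet G, ¬ G.Adj u v) :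
    (S.ncard : ℤ) ≤ ((Xset G Vp 0).ncard : ℤ) + critIndepDiff (Gsplit G Vp 0) :=
  statement14_general G t Vp hstar S h
end
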